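/- Let Ω be a finite set and τ₁, τ₂, τ₃ permutations of Ω satisfying (T1), (T2), (T3). Let A₁, A₂, A₃ be the sets of orbits of τ₁, τ₂, τ₃ respectively, and define T⊕ = { (o₁,o₂,o₃) ∈ A₁ × A₂ × A₃ : o₁ ∩ o₂ ∩ o₃ ≠ ∅ } and T⊗ = { (o₁,o₂,o₃) ∈ A₁ × A₂ × A₃ : there exists x ∈ o₁ such that τ₁(x) ∈ o₂, τ₂(τ₁(x)) ∈ o₃, and x, τ₁(x), τ₂(τ₁(x)) are pairwise distinct }. Then (T⊕, T⊗) is a latin bitrade. -/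
import Mathlib


/-- `agreeCoord r a b` says the triples `a` and `b` agree in coordinate `r`. -/
def agreeCoord {A₁ A₂ A₃ : Type*} (r : Fin 3) (a b : A₁ × A₂ × A₃) : Prop :=
  ![a.1 = b.1, a.2.1 = b.2.1, a.2.2 = b.2.2] r

/-- A partial latin square: any two triples agreeing in two coordinates are equal. -/
def IsPLS {A₁ A₂ A₃ : Type*} (T : Set (A₁ × A₂ × A₃)) : Prop :=
  ∀ a ∈ T, ∀ b ∈ T, ∀ r s : Fin 3, r ≠ s →
    agreeCoord r a b → agreeCoord s a b → a = b

/-- A latin bitrade `(Tp, Tm)`: two disjoint partial latin squares such that for each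
triple of one and each pair of coordinates there is a unique triple of the other
agreeing with it in those two coordinates. -/
structure IsBitrade {A₁ A₂ A₃ : Type*} (Tp Tm : Set (A₁ × A₂ × A₃)) : Prop where
  pls_left : IsPLS Tp
  pls_right : IsPLS Tm
  disj : Tp ∩ Tm = ∅
  r2 : ∀ a ∈ Tp, ∀ r s : Fin 3, r ≠ s →
    ∃! b, b ∈ Tm ∧ agreeCoord r a b ∧ agreeCoord s a b
  r3 : ∀ a ∈ Tm, ∀ r s : Fin 3, r ≠ s →
    ∃! b, b ∈ Tp ∧ agreeCoord r a b ∧ agreeCoord s a b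

/-- The set of orbits (cycles) of a permutation `σ` of `Ω`. -/
def orbitsOf {Ω : Type*} (σ : Equiv.Perm Ω) : Set (Set Ω) :=
  {o | ∃ x : Ω, o = {y | σ.SameCycle x y}}

section Aux

variable {Ω : Type*}

/-- The orbit of `x` under `σ`, as an element of `orbitsOf σ`. -/
def orbOf (σ : Equiv.Perm Ω) (x : Ω) : orbitsOf σ := ⟨{y | σ.SameCycle x y}, x, rfl⟩

lemma mem_orbOf {σ : Equiv.Perm Ω} {x y : Ω} :
    y ∈ (orbOf σ x).val ↔ σ.SameCycle x y := Iff.rfl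

lemma orbOf_eq_of_sameCycle {σ : Equiv.Perm Ω} {x y : Ω} (h : σ.SameCycle x y) :
    orbOf σ x = orbOf σ y := by
  apply Subtype.ext
  ext z
  exact ⟨fun hz => h.symm.trans hz, fun hz => h.trans hz⟩

lemma orbOf_eq_iff {σ : Equiv.Perm Ω} {x y : Ω} :
    orbOf σ x = orbOf σ y ↔ σ.SameCycle x y := by
  refine ⟨fun h => ?_, orbOf_eq_of_sameCycle⟩
  have : y ∈ (orbOf σ x).val := by rw [h]; exact Equiv.Perm.SameCycle.refl σ y
  exact this

lemma eq_orbOf_of_mem {σ : Equiv.Perm Ω} {o : orbitsOf σ} {x : Ω} (h : x ∈ o.val) :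
    o = orbOf σ x := by
  obtain ⟨v, z, hz⟩ := o
  have hx : σ.SameCycle z x := by simpa [hz] using h
  have : (⟨v, z, hz⟩ : orbitsOf σ) = orbOf σ z := Subtype.ext hz
  rw [this]
  exact orbOf_eq_of_sameCycle hx

lemma agreeCoord_symm {A₁ A₂ A₃ : Type*} {r : Fin 3} {a b : A₁ × A₂ × A₃}
    (h : agreeCoord r a b) : agreeCoord r b a := by
  fin_cases r
  · exact (h : a.1 = b.1).symm
  · exact (h : a.2.1 = b.2.1).symm
  · exact (h : a.2.2 = b.2.2).symm

lemma agreeCoord_trans {A₁ A₂ A₃ : Type*} {r : Fin 3} {a b c : A₁ × A₂ × A₃}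
    (h : agreeCoord r a b) (h' : agreeCoord r b c) : agreeCoord r a c := by
  fin_cases r
  · exact (h : a.1 = b.1).trans h'
  · exact (h : a.2.1 = b.2.1).trans h'
  · exact (h : a.2.2 = b.2.2).trans h'

/-- Existence plus partial-latin-square property gives unique existence. -/
lemma existsUnique_of_pls {A₁ A₂ A₃ : Type*} {S : Set (A₁ × A₂ × A₃)} (hS : IsPLS S)
    {a : A₁ × A₂ × A₃} {r s : Fin 3} (hrs : r ≠ s)
    (h : ∃ b, b ∈ S ∧ agreeCoord r a b ∧ agreeCoord s a b) :
    ∃! b, b ∈ S ∧ agreeCoord r a b ∧ agreeCoord s a b := by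
  obtain ⟨b, hb, hr, hs⟩ := h
  refine ⟨b, ⟨hb, hr, hs⟩, ?_⟩
  rintro c ⟨hc, hcr, hcs⟩
  exact hS c hc b hb r s hrs (agreeCoord_trans (agreeCoord_symm hcr) hr)
    (agreeCoord_trans (agreeCoord_symm hcs) hs)

lemma fin3_adj {r s : Fin 3} (hrs : r ≠ s) : s = r + 1 ∨ r = s + 1 := by
  fin_cases r <;> fin_cases s <;> simp_all

end Aux

/-- Dr\'apal's construction: given permutations `τ₁, τ₂, τ₃` of a finite set `Ω`
satisfying (T1), (T2), (T3), the pair of arrays indexed by orbits of the `τᵢ`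
obtained from triple intersections (resp. from `x, τ₁(x), τ₂(τ₁(x))` with the
three points pairwise distinct) is a latin bitrade. -/
theorem tau_to_bitrade
    {Ω : Type*} [Finite Ω] (τ : Fin 3 → Equiv.Perm Ω)
    (hT1 : ∀ x : Ω, τ 2 (τ 1 (τ 0 x)) = x)
    (hT2 : ∀ i j : Fin 3, i ≠ j → ∀ x y : Ω,
      (τ i).SameCycle x y → (τ j).SameCycle x y → x = y)
    (hT3 : ∀ i : Fin 3, ∀ x : Ω, τ i x ≠ x) :
    IsBitrade
      {p : orbitsOf (τ 0) × orbitsOf (τ 1) × orbitsOf (τ 2) |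
        (p.1.val ∩ p.2.1.val ∩ p.2.2.val).Nonempty}
      {p : orbitsOf (τ 0) × orbitsOf (τ 1) × orbitsOf (τ 2) |
        ∃ x ∈ p.1.val, τ 0 x ∈ p.2.1.val ∧ τ 1 (τ 0 x) ∈ p.2.2.val ∧
          x ≠ τ 0 x ∧ τ 0 x ≠ τ 1 (τ 0 x) ∧ x ≠ τ 1 (τ 0 x)} := by
  set Tp : Set (orbitsOf (τ 0) × orbitsOf (τ 1) × orbitsOf (τ 2)) :=
    {p | (p.1.val ∩ p.2.1.val ∩ p.2.2.val).Nonempty} with hTpdef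
  set Tm : Set (orbitsOf (τ 0) × orbitsOf (τ 1) × orbitsOf (τ 2)) :=
    {p | ∃ x ∈ p.1.val, τ 0 x ∈ p.2.1.val ∧ τ 1 (τ 0 x) ∈ p.2.2.val ∧
      x ≠ τ 0 x ∧ τ 0 x ≠ τ 1 (τ 0 x) ∧ x ≠ τ 1 (τ 0 x)} with hTmdef
  -- the triple of orbits associated to a `Fin 3`-indexed family of points
  set F : (Fin 3 → Ω) → orbitsOf (τ 0) × orbitsOf (τ 1) × orbitsOf (τ 2) :=
    fun v => (orbOf (τ 0) (v 0), orbOf (τ 1) (v 1), orbOf (τ 2) (v 2)) with hFdef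
  -- the three points x, τ₀ x, τ₁ τ₀ x
  set u : Fin 3 → Ω → Ω := ![fun x => x, fun x => τ 0 x, fun x => τ 1 (τ 0 x)] with hudef
  have hu0 : ∀ x, u 0 x = x := fun x => rfl
  have hu1 : ∀ x, u 1 x = τ 0 x := fun x => rfl
  have hu2 : ∀ x, u 2 x = τ 1 (τ 0 x) := fun x => rfl
  have agree_iff : ∀ (v w : Fin 3 → Ω) (r : Fin 3),
      agreeCoord r (F v) (F w) ↔ orbOf (τ r) (v r) = orbOf (τ r) (w r) := by
    intro v w r
    fin_cases r <;> exact Iff.rfl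
  have hu_adj : ∀ (r : Fin 3) (x : Ω), (τ r).SameCycle (u r x) (u (r + 1) x) := by
    intro r x
    fin_cases r
    · exact ⟨1, by simp [hu0, hu1]⟩
    · exact ⟨1, by simp [hu1, hu2]⟩
    · exact ⟨1, by simp [hu2, hu0, hT1]⟩
  have hshift : ∀ (r : Fin 3) (x : Ω),
      orbOf (τ r) (u r x) = orbOf (τ r) (u (r + 1) x) :=
    fun r x => orbOf_eq_of_sameCycle (hu_adj r x)
  have hu_inj : ∀ r : Fin 3, Function.Injective (u r) := by
    intro r
    fin_cases r
    · exact fun a b h => h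
    · exact fun a b h => (τ 0).injective h
    · exact fun a b h => (τ 0).injective ((τ 1).injective h)
  have hu_surj : ∀ (r : Fin 3) (x : Ω), ∃ y, u r y = x := by
    intro r x
    fin_cases r
    · exact ⟨x, rfl⟩
    · exact ⟨(τ 0)⁻¹ x, by simp [hu1]⟩
    · exact ⟨(τ 0)⁻¹ ((τ 1)⁻¹ x), by simp [hu2]⟩
  have hsep : ∀ (i j : Fin 3), i ≠ j → ∀ x y : Ω,
      orbOf (τ i) x = orbOf (τ i) y → orbOf (τ j) x = orbOf (τ j) y → x = y := by
    intro i j hij x y h1 h2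
    exact hT2 i j hij x y (orbOf_eq_iff.mp h1) (orbOf_eq_iff.mp h2)
  -- membership lemmas
  have hTp_mem : ∀ x : Ω, F (fun _ => x) ∈ Tp := by
    intro x
    exact ⟨x, ⟨Equiv.Perm.SameCycle.refl _ x, Equiv.Perm.SameCycle.refl _ x⟩,
      Equiv.Perm.SameCycle.refl _ x⟩
  have hTp_eq : ∀ a ∈ Tp, ∃ x : Ω, a = F (fun _ => x) := by
    rintro ⟨o₀, o₁, o₂⟩ ⟨x, ⟨⟨h0, h1⟩, h2⟩⟩
    refine ⟨x, ?_⟩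
    have e0 : o₀ = orbOf (τ 0) x := eq_orbOf_of_mem h0
    have e1 : o₁ = orbOf (τ 1) x := eq_orbOf_of_mem h1
    have e2 : o₂ = orbOf (τ 2) x := eq_orbOf_of_mem h2
    simp [hFdef, e0, e1, e2]
  have hTm_mem : ∀ x : Ω, F (fun r => u r x) ∈ Tm := by
    intro x
    refine ⟨x, ?_, ?_, ?_, Ne.symm (hT3 0 x), Ne.symm (hT3 1 _), ?_⟩
    · exact Equiv.Perm.SameCycle.refl _ x
    · exact Equiv.Perm.SameCycle.refl _ _
    · exact Equiv.Perm.SameCycle.refl _ _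
    · intro h
      apply hT3 2 x
      calc τ 2 x = τ 2 (τ 1 (τ 0 x)) := by rw [← h]
        _ = x := hT1 x
  have hTm_eq : ∀ a ∈ Tm, ∃ x : Ω, a = F (fun r => u r x) := by
    rintro ⟨o₀, o₁, o₂⟩ ⟨x, h0, h1, h2, -, -, -⟩
    refine ⟨x, ?_⟩
    have e0 : o₀ = orbOf (τ 0) x := eq_orbOf_of_mem h0
    have e1 : o₁ = orbOf (τ 1) (τ 0 x) := eq_orbOf_of_mem h1
    have e2 : o₂ = orbOf (τ 2) (τ 1 (τ 0 x)) := eq_orbOf_of_mem h2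
    simp [hFdef, e0, e1, e2, hu0, hu1, hu2]
  -- partial latin square properties
  have plsTp : IsPLS Tp := by
    intro a ha b hb r s hrs h1 h2
    obtain ⟨x, rfl⟩ := hTp_eq a ha
    obtain ⟨y, rfl⟩ := hTp_eq b hb
    have hx : x = y := hsep r s hrs x y
      ((agree_iff (fun _ => x) (fun _ => y) r).mp h1)
      ((agree_iff (fun _ => x) (fun _ => y) s).mp h2)
    rw [hx]
  have plsTm_aux : ∀ (r s : Fin 3), r ≠ s → s = r + 1 → ∀ x y : Ω,
      orbOf (τ r) (u r x) = orbOf (τ r) (u r y) →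
      orbOf (τ s) (u s x) = orbOf (τ s) (u s y) → x = y := by
    intro r s hrs hs x y h1 h2
    have h1' : orbOf (τ r) (u s x) = orbOf (τ r) (u s y) := by
      rw [hs, ← hshift r x, ← hshift r y]; exact h1
    exact hu_inj s (hsep r s hrs _ _ h1' h2)
  have plsTm : IsPLS Tm := by
    intro a ha b hb r s hrs h1 h2
    obtain ⟨x, rfl⟩ := hTm_eq a ha
    obtain ⟨y, rfl⟩ := hTm_eq b hb
    have h1' := (agree_iff (fun r => u r x) (fun r => u r y) r).mp h1
    have h2' := (agree_iff (fun r => u r x) (fun r => u r y) s).mp h2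
    rcases fin3_adj hrs with h | h
    · rw [plsTm_aux r s hrs h x y h1' h2']
    · rw [plsTm_aux s r (Ne.symm hrs) h x y h2' h1']
  -- disjointness
  have hdisj : Tp ∩ Tm = ∅ := by
    rw [Set.eq_empty_iff_forall_notMem]
    rintro a ⟨hap, ham⟩
    obtain ⟨x, rfl⟩ := hTp_eq a hap
    obtain ⟨y, hy⟩ := hTm_eq _ ham
    have hcoord : ∀ r : Fin 3, orbOf (τ r) x = orbOf (τ r) (u r y) := by
      intro r
      exact (agree_iff (fun _ => x) (fun r => u r y) r).mp (by rw [← hy]; fin_cases r <;> rfl)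
    have h01 : x = u 1 y := by
      refine hsep 0 1 (by decide) _ _ ?_ (hcoord 1)
      rw [hcoord 0]
      have := hshift 0 y
      simpa using this
    have h12 : x = u 2 y := by
      refine hsep 1 2 (by decide) _ _ ?_ (hcoord 2)
      rw [h01]
      have := hshift 1 y
      simpa using this
    apply hT3 1 x
    have : τ 1 x = u 2 y := by rw [h01, hu1, hu2]
    rw [this, ← h12]
  -- R2 existence
  have r2ex : ∀ (r s : Fin 3), s = r + 1 → ∀ x : Ω,
      ∃ b, b ∈ Tm ∧ agreeCoord r (F fun _ => x) b ∧ agreeCoord s (F fun _ => x) b := by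
    intro r s hs x
    obtain ⟨y, hy⟩ := hu_surj s x
    refine ⟨F (fun r => u r y), hTm_mem y, ?_, ?_⟩
    · refine (agree_iff (fun _ => x) (fun r => u r y) r).mpr ?_
      rw [← hy, hs]
      exact (hshift r y).symm
    · refine (agree_iff (fun _ => x) (fun r => u r y) s).mpr ?_
      rw [hy]
  -- R3 existence
  have r3ex : ∀ (r s : Fin 3), s = r + 1 → ∀ x : Ω,
      ∃ b, b ∈ Tp ∧ agreeCoord r (F fun r => u r x) b ∧ agreeCoord s (F fun r => u r x) b := by
    intro r s hs x
    refine ⟨F (fun _ => u s x), hTp_mem _, ?_, ?_⟩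
    · exact (agree_iff (fun r => u r x) (fun _ => u s x) r).mpr (by rw [hshift r x, hs])
    · exact (agree_iff (fun r => u r x) (fun _ => u s x) s).mpr rfl
  refine ⟨plsTp, plsTm, hdisj, ?_, ?_⟩
  · intro a ha r s hrs
    obtain ⟨x, rfl⟩ := hTp_eq a ha
    refine existsUnique_of_pls plsTm hrs ?_
    rcases fin3_adj hrs with h | h
    · exact r2ex r s h x
    · obtain ⟨b, hb, h1, h2⟩ := r2ex s r h x
      exact ⟨b, hb, h2, h1⟩
  · intro a ha r s hrs
    obtain ⟨x, rfl⟩ := hTm_eq a ha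
    refine existsUnique_of_pls plsTp hrs ?_
    rcases fin3_adj hrs with h | h
    · exact r3ex r s h x
    · obtain ⟨b, hb, h1, h2⟩ := r3ex s r h x
      exact ⟨b, hb, h2, h1⟩
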